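/- arXiv:1709.05052 — 3 statements merged into one kernel-verified Lean document; each statement's English description precedes it below -/
import Mathlib

section
/- If G is a graph such that γ_R(G − v) < γ_R(G) for every vertex v, then γ_R(G − e) = γ_R(G) for every edge e of G. -/
def IsRDF {V : Type*} (G : SimpleGraph V) (f : V → ℕ) : Prop :=
  (∀ v, f v ≤ 2) ∧ ∀ v, f v = 0 → ∃ u, G.Adj v u ∧ f u = 2

noncomputable def gammaR {V : Type*} [Fintype V] (G : SimpleGraph V) : ℕ :=
  sInf {w | ∃ f, IsRDF G f ∧ ∑ v, f v = w}

def IsMinRDF {V : Type*} [Fintype V] (G : SimpleGraph V) (f : V → ℕ) : Prop :=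
  IsRDF G f ∧ ∑ v, f v = gammaR G

noncomputable instance myInstSetFintype {V : Type*} [Fintype V] (s : Set V) : Fintype s :=
  s.toFinite.fintype

lemma rdf_set_nonempty {V : Type*} [Fintype V] (G : SimpleGraph V) :
    {w | ∃ f, IsRDF G f ∧ ∑ v, f v = w}.Nonempty := by
  refine ⟨∑ _v : V, 2, fun _ => 2, ⟨fun v => le_refl 2, fun v hv => by simp at hv⟩, rfl⟩

lemma gammaR_le {V : Type*} [Fintype V] (G : SimpleGraph V) (f : V → ℕ) (hf : IsRDF G f) :
    gammaR G ≤ ∑ v, f v :=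
  Nat.sInf_le ⟨f, hf, rfl⟩

lemma exists_minRDF {V : Type*} [Fintype V] (G : SimpleGraph V) :
    ∃ f, IsRDF G f ∧ ∑ v, f v = gammaR G :=
  Nat.sInf_mem (rdf_set_nonempty G)

lemma gammaR_anti {V : Type*} [Fintype V] {G H : SimpleGraph V} (hle : G ≤ H) :
    gammaR H ≤ gammaR G := by
  obtain ⟨f, ⟨hf2, hfdom⟩, hsum⟩ := exists_minRDF G
  calc gammaR H ≤ ∑ v, f v := by
        refine gammaR_le H f ⟨hf2, fun v hv => ?_⟩
        obtain ⟨u, hu, hu2⟩ := hfdom v hv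
        exact ⟨u, hle hu, hu2⟩
    _ = gammaR G := hsum

theorem gammaR_edge_removal_of_vertex_critical {V : Type*} [Fintype V] (G : SimpleGraph V)
    (h : ∀ v : V, gammaR (G.induce {u | u ≠ v}) < gammaR G) :
    ∀ x y, G.Adj x y → gammaR (G.deleteEdges {s(x, y)}) = gammaR G := by
  intro x y _hxy
  classical
  refine le_antisymm ?_ (gammaR_anti (SimpleGraph.deleteEdges_le _))
  -- get a minimum RDF on G - x
  obtain ⟨g, ⟨hg2, hgdom⟩, hgsum⟩ := exists_minRDF (G.induce {u | u ≠ x})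
  set f : V → ℕ := fun v => if hv : v ∈ {u | u ≠ x} then g ⟨v, hv⟩ else 1 with hf
  have hfx : f x = 1 := by simp [hf]
  have hfne : ∀ (v : V) (hv : v ≠ x), f v = g ⟨v, hv⟩ := by
    intro v hv; simp [hf, hv]
  have hrdf : IsRDF (G.deleteEdges {s(x, y)}) f := by
    constructor
    · intro v
      by_cases hv : v = x
      · subst hv; rw [hfx]; omega
      · rw [hfne v hv]; exact hg2 _
    · intro v hv0
      have hv : v ≠ x := by
        intro hvx; subst hvx; rw [hfx] at hv0; omega
      rw [hfne v hv] at hv0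
      obtain ⟨u, hu, hu2⟩ := hgdom ⟨v, hv⟩ hv0
      have hadj : G.Adj v u.val := hu
      have hux : u.val ≠ x := u.property
      refine ⟨u.val, ?_, by rw [hfne u.val hux]; exact hu2⟩
      rw [SimpleGraph.deleteEdges_adj]
      refine ⟨hadj, ?_⟩
      intro hmem
      simp only [Set.mem_singleton_iff, Sym2.eq_iff] at hmem
      rcases hmem with ⟨h1, _⟩ | ⟨_, h2⟩
      · exact hv h1
      · exact hux h2
  have hsum : ∑ v, f v = gammaR (G.induce {u | u ≠ x}) + 1 := by
    have h1 : f x + ∑ v ∈ Finset.univ.erase x, f v = ∑ v, f v :=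
      Finset.add_sum_erase _ f (Finset.mem_univ x)
    have h2 : ∑ v ∈ Finset.univ.erase x, f v = ∑ u : {u | u ≠ x}, f u.val := by
      refine Finset.sum_subtype _ (fun v => ?_) f
      simp [Set.mem_setOf_eq]
    have h3 : ∑ u : {u | u ≠ x}, f u.val = ∑ u : {u | u ≠ x}, g u :=
      Finset.sum_congr rfl (fun u _ => hfne u.val u.property)
    omega
  have := gammaR_le _ f hrdf
  have hx := h x
  omega
end

section
/- Let G be a graph with γ_R(G − S) < γ_R(G) for every k-subset S of V(G), and let x be a vertex of degree exactly k. Then γ_R(G − N(x)) = γ_R(G) − 1, and there is a minimum-weight Roman dominating function f on G with f(x) = 2 and f(u) = 0 for every neighbor u of x. -/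
/-!
A minimum Roman dominating function `g` of `H = G - N(x)` gives `x`, an isolated vertex of `H`,
a positive label. Relabelling `x` by `2` and the neighbours of `x` by `0` gives a Roman
dominating function of `G` of weight at most `w(g) + 1`, so `γ_R(G) ≤ γ_R(H) + 1`. Since
`|N(x)| = k`, criticality gives `γ_R(H) < γ_R(G)`, so both inequalities are equalities and the
relabelled function is a minimum one.
-/

section

variable {V : Type*}

theorem IsRDF.ne_zero_of_forall_not_adj {G : SimpleGraph V} {f : V → ℕ} (hf : IsRDF G f)
    {v : V} (hv : ∀ u, ¬G.Adj v u) : f v ≠ 0 := fun h0 =>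
  let ⟨u, hu, _⟩ := hf.2 v h0
  hv u hu

section Fintype

variable [Fintype V]

theorem gammaR_le_sum {G : SimpleGraph V} {f : V → ℕ} (hf : IsRDF G f) :
    gammaR G ≤ ∑ v, f v :=
  Nat.sInf_le ⟨f, hf, rfl⟩

theorem exists_isMinRDF (G : SimpleGraph V) : ∃ f, IsMinRDF G f :=
  Nat.sInf_mem (s := {w | ∃ f, IsRDF G f ∧ ∑ v, f v = w})
    ⟨_, fun _ => 2, ⟨fun _ => le_rfl, fun _ h => absurd h two_ne_zero⟩, rfl⟩

theorem sum_eq_sum_subtype_of_eq_zero {M : Type*} [AddCommMonoid M] (s : Set V) [Fintype s]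
    (f : V → M) (hf : ∀ v ∉ s, f v = 0) : ∑ v, f v = ∑ v : s, f v := by
  rw [Finset.sum_set_coe]
  refine (Fintype.sum_subset fun v hv => ?_).symm
  simpa using not_imp_comm.mp (hf v) hv

end Fintype

section StarExtension

variable (G : SimpleGraph V) (x : V)

theorem not_adj_induce_compl_neighborSet (u : {u | u ∉ G.neighborSet x}) :
    ¬(G.induce {u | u ∉ G.neighborSet x}).Adj ⟨x, G.notMem_neighborSet_self⟩ u :=
  fun hu => u.2 (SimpleGraph.comap_adj.mp hu)

open Classical in
noncomputable def starExtension (g : {u | u ∉ G.neighborSet x} → ℕ) (v : V) : ℕ :=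
  if v = x then 2 else if h : v ∈ G.neighborSet x then 0 else g ⟨v, h⟩

variable {G x} (g : {u | u ∉ G.neighborSet x} → ℕ)

theorem starExtension_self : starExtension G x g x = 2 := by
  simp [starExtension]

theorem starExtension_of_mem_neighborSet {u : V} (hu : u ∈ G.neighborSet x) :
    starExtension G x g u = 0 := by
  simp [starExtension, hu, (G.ne_of_adj hu).symm]

theorem starExtension_of_ne {u : {u | u ∉ G.neighborSet x}} (hu : (u : V) ≠ x) :
    starExtension G x g u = g u := by
  simp [starExtension, hu, show (u : V) ∉ G.neighborSet x from u.2]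

theorem isRDF_starExtension (hg : IsRDF (G.induce {u | u ∉ G.neighborSet x}) g) :
    IsRDF G (starExtension G x g) := by
  refine ⟨fun v => ?_, fun v hv => ?_⟩
  · unfold starExtension
    split_ifs <;> simp [hg.1]
  by_cases hvx : v = x
  · simp [hvx, starExtension_self] at hv
  by_cases hvN : v ∈ G.neighborSet x
  · exact ⟨x, (G.mem_neighborSet x v).mp hvN |>.symm, starExtension_self g⟩
  rw [starExtension_of_ne g (u := ⟨v, hvN⟩) hvx] at hv
  obtain ⟨u, hvu, hu⟩ := hg.2 _ hv
  refine ⟨u, SimpleGraph.comap_adj.mp hvu, ?_⟩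
  by_cases hux : (u : V) = x
  · rw [hux, starExtension_self]
  · rwa [starExtension_of_ne g hux]

variable [Fintype V]

theorem sum_starExtension_add :
    ∑ v, starExtension G x g v + g ⟨x, G.notMem_neighborSet_self⟩ = ∑ v, g v + 2 := by
  classical
  set x' : {u | u ∉ G.neighborSet x} := ⟨x, G.notMem_neighborSet_self⟩
  have hsubtype : ∀ v : {u | u ∉ G.neighborSet x},
      starExtension G x g v = Function.update g x' 2 v := by
    intro v
    by_cases hv : v = x'
    · rw [hv, Function.update_self]
      exact starExtension_self g
    · rw [Function.update_of_ne hv, starExtension_of_ne g fun h => hv (Subtype.ext h)]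
  rw [sum_eq_sum_subtype_of_eq_zero {u | u ∉ G.neighborSet x} _
      fun v hv => starExtension_of_mem_neighborSet g (by simpa using hv),
    Finset.sum_congr rfl fun v _ => hsubtype v, Finset.sum_update_of_mem (Finset.mem_univ x'),
    Finset.sum_eq_add_sum_sdiff_singleton_of_mem (Finset.mem_univ x') g]
  ring

end StarExtension

end

theorem gammaR_kcritical_neighborhood_removal {V : Type*} [Fintype V]
    (G : SimpleGraph V) (k : ℕ)
    (hcrit : ∀ S : Finset V, S.card = k → gammaR (G.induce {u | u ∉ S}) < gammaR G)
    (x : V) (hdeg : (G.neighborSet x).ncard = k) :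
    gammaR (G.induce {u | u ∉ G.neighborSet x}) = gammaR G - 1 ∧
    ∃ f, IsMinRDF G f ∧ f x = 2 ∧ ∀ u ∈ G.neighborSet x, f u = 0 := by
  have hlt : gammaR (G.induce {u | u ∉ G.neighborSet x}) < gammaR G := by
    have hS : {u | u ∉ (G.neighborSet x).toFinset} = {u | u ∉ G.neighborSet x} := by
      ext; simp
    have h := hcrit (G.neighborSet x).toFinset (by rwa [← Set.ncard_eq_toFinset_card'])
    rwa [hS] at h
  obtain ⟨g, hg, hg_sum⟩ := exists_isMinRDF (G.induce {u | u ∉ G.neighborSet x})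
  have hgx_pos := hg.ne_zero_of_forall_not_adj (not_adj_induce_compl_neighborSet G x)
  have hgx_le := hg.1 ⟨x, G.notMem_neighborSet_self⟩
  have hf := isRDF_starExtension g hg
  have hle := gammaR_le_sum hf
  have hsum := sum_starExtension_add g
  exact ⟨by omega, _, ⟨hf, by omega⟩, starExtension_self g,
    fun u hu => starExtension_of_mem_neighborSet g hu⟩
end

section
/- If n ≡ 1 (mod 3), then the path P_n on vertices x_0,…,x_{n−1} has exactly (n+2)/3 minimum-weight Roman dominating functions; each assigns label 1 to exactly one vertex x_r with r ≡ 0 (mod 3), assigns 2 to the vertices at positions ≡ 1 (mod 3) within each of the two resulting segments [0, r−1] and [r+1, n−1], and 0 elsewhere. -/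
/-- The candidate `γ_R`-function on the path `x_0, …, x_{n-1}` determined by the
position `r` of the unique vertex with label `1`: label `2` is given at positions
`≡ 1 (mod 3)` within each of the segments `[0, r-1]` and `[r+1, n-1]`, and `0` elsewhere. -/
def pathOneFun (n r : ℕ) : Fin n → ℕ := fun i =>
  if (i : ℕ) = r then 1
  else if (i : ℕ) < r then (if (i : ℕ) % 3 = 1 then 2 else 0)
  else (if ((i : ℕ) - (r + 1)) % 3 = 1 then 2 else 0)

/-!
Let `V₀, V₁, V₂` be the label classes of a Roman dominating function `f` on a graph of
maximum degree `2`. Each vertex of `V₀` has a neighbour in `V₂` and each vertex of `V₂` has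
at most two neighbours in `V₀`, so `|V₀| ≤ 2 |V₂|`, i.e. `3 w(f) ≥ 2 n + |V₁|`. For
`n ≡ 1 (mod 3)` this gives `γ_R(P_n) ≥ (2n + 1) / 3`, which `pathOneFun n 0` attains.
Equality forces `|V₁| = 1`, every `2` to have two neighbours, both labelled `0`, and every
`0` to have exactly one neighbour labelled `2`. Scanning the path away from a `1` (an end of
the path behaves like a neighbouring `1`), these local rules force the labels
`0 2 0 0 2 0 …`, and a run between two `1`s has length divisible by `3`.
-/

open Finset

def labelSet {V : Type*} [Fintype V] (f : V → ℕ) (c : ℕ) : Finset V := {v | f v = c}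

@[simp]
theorem mem_labelSet {V : Type*} [Fintype V] {f : V → ℕ} {c : ℕ} {v : V} :
    v ∈ labelSet f c ↔ f v = c := by
  simp [labelSet]

namespace IsRDF

variable {V : Type*} [Fintype V] {G : SimpleGraph V} {f : V → ℕ}

theorem sum_eq (hf : IsRDF G f) : ∑ v, f v = 2 * #(labelSet f 2) + #(labelSet f 1) := by
  simp only [labelSet, card_filter, mul_sum, ← sum_add_distrib]
  exact sum_congr rfl fun v _ => by have := hf.1 v; split_ifs <;> omega

theorem card_eq (hf : IsRDF G f) :
    Fintype.card V = #(labelSet f 0) + #(labelSet f 1) + #(labelSet f 2) := by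
  simp only [labelSet, card_filter, ← sum_add_distrib, Fintype.card_eq_sum_ones]
  exact sum_congr rfl fun v _ => by have := hf.1 v; split_ifs <;> omega

variable [DecidableRel G.Adj]

theorem one_le_card_bipartiteAbove (hf : IsRDF G f) {z : V} (hz : f z = 0) :
    1 ≤ #((labelSet f 2).bipartiteAbove G.Adj z) := by
  obtain ⟨u, hzu, hu⟩ := hf.2 z hz
  exact card_pos.2 ⟨u, by simp [bipartiteAbove, hzu, hu]⟩

theorem card_bipartiteBelow_le_two (hdeg : ∀ v, G.degree v ≤ 2) (u : V) :
    #((labelSet f 0).bipartiteBelow G.Adj u) ≤ 2 := by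
  refine le_trans (card_le_card fun z hz => ?_) (hdeg u)
  simp only [bipartiteBelow, mem_filter] at hz
  simpa [G.adj_comm] using hz.2

theorem card_zero_le (hf : IsRDF G f) :
    #(labelSet f 0) ≤ ∑ z ∈ labelSet f 0, #((labelSet f 2).bipartiteAbove G.Adj z) := by
  rw [card_eq_sum_ones]
  exact sum_le_sum fun z hz => hf.one_le_card_bipartiteAbove (mem_labelSet.1 hz)

theorem sum_le_two_mul_card (hdeg : ∀ v, G.degree v ≤ 2) :
    ∑ u ∈ labelSet f 2, #((labelSet f 0).bipartiteBelow G.Adj u) ≤ 2 * #(labelSet f 2) := by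
  rw [mul_comm, ← smul_eq_mul, ← sum_const]
  exact sum_le_sum fun u _ => card_bipartiteBelow_le_two hdeg u

theorem two_mul_card_add_le (hdeg : ∀ v, G.degree v ≤ 2) (hf : IsRDF G f) :
    2 * Fintype.card V + #(labelSet f 1) ≤ 3 * ∑ v, f v := by
  have h₀ := hf.card_zero_le
  have h₂ := sum_le_two_mul_card (f := f) hdeg
  rw [sum_card_bipartiteAbove_eq_sum_card_bipartiteBelow] at h₀
  rw [hf.sum_eq, hf.card_eq]
  omega

theorem card_eq_of_three_mul_sum_eq (hdeg : ∀ v, G.degree v ≤ 2) (hf : IsRDF G f)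
    (hw : 3 * ∑ v, f v = 2 * Fintype.card V + 1) :
    #(labelSet f 1) = 1 ∧ (∀ z, f z = 0 → #((labelSet f 2).bipartiteAbove G.Adj z) = 1) ∧
      ∀ u, f u = 2 → #((labelSet f 0).bipartiteAbove G.Adj u) = 2 := by
  have h₀ := hf.card_zero_le
  have h₂ := sum_le_two_mul_card (f := f) hdeg
  have hD := sum_card_bipartiteAbove_eq_sum_card_bipartiteBelow (s := labelSet f 0)
    (t := labelSet f 2) G.Adj
  rw [hf.sum_eq, hf.card_eq] at hw
  refine ⟨by omega, fun z hz => ?_, fun u hu => ?_⟩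
  · have hsum : ∑ z ∈ labelSet f 0, 1 =
        ∑ z ∈ labelSet f 0, #((labelSet f 2).bipartiteAbove G.Adj z) := by
      rw [← card_eq_sum_ones]; omega
    exact ((sum_eq_sum_iff_of_le fun z hz => hf.one_le_card_bipartiteAbove
      (mem_labelSet.1 hz)).1 hsum z (mem_labelSet.2 hz)).symm
  · have hsum : ∑ u ∈ labelSet f 2, #((labelSet f 0).bipartiteBelow G.Adj u) =
        ∑ u ∈ labelSet f 2, 2 := by
      rw [sum_const, smul_eq_mul]; omega
    have hsymm : (labelSet f 0).bipartiteAbove G.Adj u =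
        (labelSet f 0).bipartiteBelow G.Adj u := by
      simp only [bipartiteAbove, bipartiteBelow, G.adj_comm]
    exact hsymm ▸ (sum_eq_sum_iff_of_le fun u _ => card_bipartiteBelow_le_two hdeg u).1 hsum u
      (mem_labelSet.2 hu)

end IsRDF

theorem gammaR_eq_of_forall_le {V : Type*} [Fintype V] {G : SimpleGraph V} {f₀ : V → ℕ}
    (hf₀ : IsRDF G f₀) (hmin : ∀ f, IsRDF G f → ∑ v, f₀ v ≤ ∑ v, f v) :
    gammaR G = ∑ v, f₀ v :=
  le_antisymm (Nat.sInf_le ⟨f₀, hf₀, rfl⟩)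
    (le_csInf ⟨_, f₀, hf₀, rfl⟩ fun _ ⟨f, hf, hw⟩ => hw ▸ hmin f hf)

def pathLabel (j : ℕ) : ℕ := if j % 3 = 1 then 2 else 0

theorem pathLabel_add_two (j : ℕ) :
    pathLabel (j + 2) = if pathLabel (j + 1) = 0 ∧ pathLabel j ≠ 2 then 2 else 0 := by
  grind [pathLabel]

structure IsTightSeq (F : ℕ → ℕ) : Prop where
  two_flanked : ∀ i, F (i + 1) = 2 → F i = 0 ∧ F (i + 2) = 0
  zero_unique : ∀ i, F (i + 1) = 0 → (F i = 2 ↔ F (i + 2) ≠ 2)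

namespace IsTightSeq

variable {F : ℕ → ℕ} (hF : IsTightSeq F)
include hF

theorem eq_ite_of_zero_or_two {i : ℕ} (h : F (i + 2) = 0 ∨ F (i + 2) = 2) :
    F (i + 2) = if F (i + 1) = 0 ∧ F i ≠ 2 then 2 else 0 := by
  have h2 := hF.two_flanked (i + 1)
  have h0 := hF.zero_unique i
  rcases h with h | h <;> rw [h] <;> grind

theorem eq_pathLabel {s k : ℕ} (hs : F s = 1)
    (h : ∀ j < k, F (s + 1 + j) = 0 ∨ F (s + 1 + j) = 2) :
    ∀ j < k, F (s + 1 + j) = pathLabel j := by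
  have hfirst : 0 < k → F (s + 1) = 0 := fun hk => by
    have := hF.two_flanked s
    grind
  intro j
  induction j using Nat.twoStepInduction with
  | zero => exact hfirst
  | one =>
    intro hk
    have := hF.eq_ite_of_zero_or_two (h 1 hk)
    simp_all [pathLabel, hfirst (by omega)]
  | more j ih₀ ih₁ =>
    intro hk
    have h02 := h (j + 2) hk
    rw [show s + 1 + (j + 2) = (s + 1 + j) + 2 by ring] at h02 ⊢
    rw [hF.eq_ite_of_zero_or_two h02, ih₀ (by omega), add_assoc (s + 1), ih₁ (by omega),
      pathLabel_add_two]

theorem mod_three_eq_zero {s k : ℕ} (hs : F s = 1) (hk : F (s + 1 + k) = 1)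
    (h : ∀ j < k, F (s + 1 + j) = 0 ∨ F (s + 1 + j) = 2) : k % 3 = 0 := by
  have hpat := hF.eq_pathLabel hs h
  by_contra hmod
  obtain ⟨j, rfl⟩ : ∃ j, k = j + 1 := ⟨k - 1, by omega⟩
  have hj := hpat j (by omega)
  have hprev : F (s + j) ≠ 2 := by
    rcases j with _ | j
    · simp [hs]
    · have := hpat j (by omega)
      grind [pathLabel]
  have h2 := hF.two_flanked (s + j)
  have h0 := hF.zero_unique (s + j)
  grind [pathLabel]

end IsTightSeq

namespace SimpleGraph

instance (n : ℕ) : DecidableRel (pathGraph n).Adj := fun _ _ =>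
  decidable_of_iff' _ pathGraph_adj

theorem degree_pathGraph_le_two {n : ℕ} (v : Fin n) : (pathGraph n).degree v ≤ 2 := by
  rw [← card_neighborFinset_eq_degree]
  calc #((pathGraph n).neighborFinset v) ≤ #({(v : ℕ) - 1, (v : ℕ) + 1} : Finset ℕ) :=
        card_le_card_of_injOn Fin.val (fun u hu => by
          simp only [coe_neighborFinset, mem_neighborSet, pathGraph_adj] at hu
          simp only [coe_insert, coe_singleton, Set.mem_insert_iff, Set.mem_singleton_iff]
          omega) Fin.val_injective.injOn
    _ ≤ 2 := card_le_two

end SimpleGraph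

/-- Shifted by one (`x_i` sits at `i + 1`) and padded with the label `1`, which neither
dominates nor needs a dominator, so that the ends of the path behave like a neighbouring `1`. -/
def padOne {n : ℕ} (f : Fin n → ℕ) : ℕ → ℕ
  | 0 => 1
  | i + 1 => if h : i < n then f ⟨i, h⟩ else 1

section padOne

variable {n : ℕ} {f : Fin n → ℕ}

@[simp]
theorem padOne_val_add_one (v : Fin n) : padOne f (v + 1) = f v := by
  simp [padOne]

theorem exists_eq_val_add_one_of_padOne_ne_one {i : ℕ} (h : padOne f i ≠ 1) :
    ∃ u : Fin n, i = u + 1 := by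
  rcases i with _ | i
  · simp [padOne] at h
  · by_cases hi : i < n
    · exact ⟨⟨i, hi⟩, rfl⟩
    · simp [padOne, hi] at h

theorem card_bipartiteAbove_pathGraph {c : ℕ} (hc : c ≠ 1) (v : Fin n) :
    #((labelSet f c).bipartiteAbove (SimpleGraph.pathGraph n).Adj v) =
      (if padOne f v = c then 1 else 0) + (if padOne f (v + 2) = c then 1 else 0) := by
  rw [← sum_pair (f := fun i => if padOne f i = c then 1 else 0) (by omega : (v : ℕ) ≠ v + 2),
    ← card_filter]
  refine card_nbij (fun u => u + 1) (fun u hu => ?_) (fun u _ w _ h => ?_) (fun i hi => ?_)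
  · simp only [bipartiteAbove, coe_filter, mem_labelSet, SimpleGraph.pathGraph_adj,
      Set.mem_ofPred_eq] at hu
    simp only [coe_filter, mem_insert, mem_singleton, Set.mem_ofPred_eq, padOne_val_add_one]
    exact ⟨by omega, hu.1⟩
  · exact Fin.ext (by simpa using h)
  · simp only [coe_filter, mem_insert, mem_singleton, Set.mem_ofPred_eq] at hi
    obtain ⟨u, rfl⟩ := exists_eq_val_add_one_of_padOne_ne_one (hi.2 ▸ hc)
    rw [padOne_val_add_one] at hi
    refine ⟨u, ?_, rfl⟩
    simp only [bipartiteAbove, coe_filter, mem_labelSet, SimpleGraph.pathGraph_adj,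
      Set.mem_ofPred_eq]
    exact ⟨hi.2, by omega⟩

theorem isTightSeq_padOne
    (h₀ : ∀ z, f z = 0 → #((labelSet f 2).bipartiteAbove (SimpleGraph.pathGraph n).Adj z) = 1)
    (h₂ : ∀ u, f u = 2 → #((labelSet f 0).bipartiteAbove (SimpleGraph.pathGraph n).Adj u) = 2) :
    IsTightSeq (padOne f) where
  two_flanked i hi := by
    obtain ⟨u, hu⟩ := exists_eq_val_add_one_of_padOne_ne_one (f := f) (i := i + 1) (by omega)
    obtain rfl : i = u := by omega
    have := h₂ u (by rwa [padOne_val_add_one] at hi)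
    rw [card_bipartiteAbove_pathGraph zero_ne_one] at this
    split_ifs at this <;> omega
  zero_unique i hi := by
    obtain ⟨u, hu⟩ := exists_eq_val_add_one_of_padOne_ne_one (f := f) (i := i + 1) (by omega)
    obtain rfl : i = u := by omega
    have := h₀ u (by rwa [padOne_val_add_one] at hi)
    rw [card_bipartiteAbove_pathGraph (by norm_num)] at this
    split_ifs at this <;> simp_all

theorem padOne_add_one_eq_zero_or_two (hf : ∀ v, f v ≤ 2) {r : Fin n}
    (hr : labelSet f 1 = {r}) {i : ℕ} (hi : i < n) (hir : i ≠ r) :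
    padOne f (i + 1) = 0 ∨ padOne f (i + 1) = 2 := by
  have hne : f ⟨i, hi⟩ ≠ 1 := fun h =>
    hir (congrArg Fin.val (by simpa [hr] using mem_labelSet.2 h))
  have := hf ⟨i, hi⟩
  simp only [padOne, dif_pos hi]
  omega

end padOne

theorem sum_range_pathLabel (k : ℕ) : ∑ j ∈ range (3 * k), pathLabel j = 2 * k := by
  induction k with
  | zero => simp
  | succ k ih =>
    rw [show 3 * (k + 1) = 3 * k + 3 by ring, sum_range_add, ih]
    simp [sum_range_succ, pathLabel, Nat.add_mod]
    omega

section pathOneFun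

variable {n r : ℕ}

theorem pathOneFun_apply (i : Fin n) : pathOneFun n r i =
    if (i : ℕ) = r then 1 else if (i : ℕ) < r then pathLabel i else pathLabel (i - (r + 1)) :=
  rfl

theorem pathOneFun_eq_one_iff {i : Fin n} : pathOneFun n r i = 1 ↔ (i : ℕ) = r := by
  rw [pathOneFun_apply, pathLabel, pathLabel]
  split_ifs <;> simp_all

theorem injOn_pathOneFun : Set.InjOn (pathOneFun n) {r | r < n} := fun r₁ h₁ r₂ _ h => by
  have h₁ : pathOneFun n r₁ ⟨r₁, h₁⟩ = 1 := pathOneFun_eq_one_iff.2 rfl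
  exact pathOneFun_eq_one_iff.1 (h ▸ h₁)

theorem sum_pathOneFun (hr : r < n) (hr3 : r % 3 = 0) (hn : n % 3 = 1) :
    ∑ v, pathOneFun n r v = 2 * (n / 3) + 1 := by
  obtain ⟨a, rfl⟩ : ∃ a, r = 3 * a := ⟨r / 3, by omega⟩
  obtain ⟨b, rfl⟩ : ∃ b, n = 3 * a + (1 + 3 * b) := ⟨(n - 3 * a - 1) / 3, by omega⟩
  simp only [pathOneFun_apply]
  rw [Fin.sum_univ_eq_sum_range (fun i => if i = 3 * a then 1
    else if i < 3 * a then pathLabel i else pathLabel (i - (3 * a + 1))), sum_range_add,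
    sum_range_add, sum_range_one]
  have hleft : ∑ i ∈ range (3 * a), (if i = 3 * a then 1 else if i < 3 * a then pathLabel i
      else pathLabel (i - (3 * a + 1))) = ∑ i ∈ range (3 * a), pathLabel i :=
    sum_congr rfl fun i hi => by rw [if_neg (by simp at hi; omega), if_pos (by simpa using hi)]
  have hright : ∑ j ∈ range (3 * b), (if 3 * a + (1 + j) = 3 * a then 1
      else if 3 * a + (1 + j) < 3 * a then pathLabel (3 * a + (1 + j))
      else pathLabel (3 * a + (1 + j) - (3 * a + 1))) = ∑ j ∈ range (3 * b), pathLabel j :=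
    sum_congr rfl fun j _ => by rw [if_neg (by omega), if_neg (by omega)]; congr 1; omega
  rw [hleft, hright, sum_range_pathLabel, sum_range_pathLabel, add_zero, if_pos rfl]
  omega

theorem isRDF_pathOneFun (hr : r < n) (hr3 : r % 3 = 0) (hn : n % 3 = 1) :
    IsRDF (SimpleGraph.pathGraph n) (pathOneFun n r) := by
  refine ⟨fun v => by rw [pathOneFun_apply, pathLabel, pathLabel]; split_ifs <;> omega,
    fun v hv => ?_⟩
  rw [pathOneFun_apply, pathLabel, pathLabel] at hv
  by_cases hnext : (if (v : ℕ) < r then (v : ℕ) else v - (r + 1)) % 3 = 0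
  · refine ⟨⟨v + 1, by split_ifs at hv hnext <;> omega⟩, by simp [SimpleGraph.pathGraph_adj], ?_⟩
    simp only [pathOneFun_apply, pathLabel]
    split_ifs at hv hnext ⊢ <;> omega
  · refine ⟨⟨v - 1, by omega⟩, ?_, ?_⟩
    · simp only [SimpleGraph.pathGraph_adj]
      split_ifs at hv hnext <;> omega
    · simp only [pathOneFun_apply, pathLabel]
      split_ifs at hv hnext ⊢ <;> omega

end pathOneFun

section pathGraph

variable {n : ℕ}

theorem gammaR_pathGraph (hn : n % 3 = 1) :
    gammaR (SimpleGraph.pathGraph n) = 2 * (n / 3) + 1 := by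
  have hf₀ := isRDF_pathOneFun (n := n) (r := 0) (by omega) rfl hn
  have hw₀ := sum_pathOneFun (n := n) (r := 0) (by omega) rfl hn
  rw [← hw₀, gammaR_eq_of_forall_le hf₀]
  intro f hf
  have := hf.two_mul_card_add_le SimpleGraph.degree_pathGraph_le_two
  rw [Fintype.card_fin] at this
  omega

theorem eq_pathOneFun_of_isRDF (hn : n % 3 = 1) {f : Fin n → ℕ}
    (hf : IsRDF (SimpleGraph.pathGraph n) f) (hw : ∑ v, f v = 2 * (n / 3) + 1) :
    ∃ r, r < n ∧ r % 3 = 0 ∧ f = pathOneFun n r := by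
  obtain ⟨h₁, h₀, h₂⟩ := hf.card_eq_of_three_mul_sum_eq SimpleGraph.degree_pathGraph_le_two
    (by rw [Fintype.card_fin]; omega)
  obtain ⟨r, hr⟩ := card_eq_one.1 h₁
  have hF := isTightSeq_padOne h₀ h₂
  have hr₁ : padOne f (r + 1) = 1 := by
    rw [padOne_val_add_one, ← mem_labelSet, hr, mem_singleton]
  have hleft02 : ∀ j < (r : ℕ), padOne f (0 + 1 + j) = 0 ∨ padOne f (0 + 1 + j) = 2 :=
    fun j hj => by
      rw [zero_add, add_comm]
      exact padOne_add_one_eq_zero_or_two hf.1 hr (by omega) (by omega)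
  have hleft := hF.eq_pathLabel rfl hleft02
  have hr₃ := hF.mod_three_eq_zero rfl (by rwa [zero_add, add_comm]) hleft02
  have hright := hF.eq_pathLabel (k := n - (r + 1)) hr₁ fun j hj => by
    rw [show (r : ℕ) + 1 + 1 + j = (r + 1 + j) + 1 by ring]
    exact padOne_add_one_eq_zero_or_two hf.1 hr (by omega) (by omega)
  refine ⟨r, r.isLt, hr₃, funext fun v => ?_⟩
  rw [← padOne_val_add_one (f := f), pathOneFun_apply]
  split_ifs with hvr hvr'
  · rwa [hvr]
  · rw [← hleft v hvr', zero_add, add_comm]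
  · rw [← hright (v - (r + 1)) (by omega)]
    congr 1
    omega

end pathGraph

theorem ncard_setOf_lt_and_mod_three_eq_zero (n : ℕ) :
    {r | r < n ∧ r % 3 = 0}.ncard = (n + 2) / 3 := by
  have h := Nat.count_modEq_card n (r := 3) (by norm_num) 0
  rw [Nat.count_eq_card_filter_range] at h
  rw [show {r | r < n ∧ r % 3 = 0} = ↑({r ∈ range n | r ≡ 0 [MOD 3]} : Finset ℕ) by
      ext; simp [Nat.modEq_zero_iff_dvd, Nat.dvd_iff_mod_eq_zero],
    Set.ncard_coe_finset, h]
  split_ifs <;> omega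

theorem path_minRDF_mod_one (n : ℕ) (hn : n % 3 = 1) :
    (∀ f, IsMinRDF (SimpleGraph.pathGraph n) f ↔
        ∃ r, r < n ∧ r % 3 = 0 ∧ f = pathOneFun n r) ∧
    {f | IsMinRDF (SimpleGraph.pathGraph n) f}.ncard = (n + 2) / 3 := by
  have hchar : ∀ f, IsMinRDF (SimpleGraph.pathGraph n) f ↔
      ∃ r, r < n ∧ r % 3 = 0 ∧ f = pathOneFun n r := fun f => by
    rw [IsMinRDF, gammaR_pathGraph hn]
    constructor
    · exact fun ⟨hf, hw⟩ => eq_pathOneFun_of_isRDF hn hf hw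
    · rintro ⟨r, hr, hr₃, rfl⟩
      exact ⟨isRDF_pathOneFun hr hr₃ hn, sum_pathOneFun hr hr₃ hn⟩
  have himage : {f | IsMinRDF (SimpleGraph.pathGraph n) f} =
      pathOneFun n '' {r | r < n ∧ r % 3 = 0} := by
    ext f
    rw [Set.mem_ofPred_eq, hchar]
    exact ⟨fun ⟨r, hr, hr₃, h⟩ => ⟨r, ⟨hr, hr₃⟩, h.symm⟩,
      fun ⟨r, hr, h⟩ => ⟨r, hr.1, hr.2, h.symm⟩⟩
  refine ⟨hchar, ?_⟩
  rw [himage, (injOn_pathOneFun.mono fun r hr => hr.1).ncard_image,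
    ncard_setOf_lt_and_mod_three_eq_zero]
end
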